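/- arXiv:1105.3442 — 3 statements merged into one kernel-verified Lean document; each statement's English description precedes it below -/
import Mathlib

section
/- If μ is a strongly r-invariant probability measure, m₀ a QMF filter with |m₀|² not constant μ-a.e., μ(m₀ = 0) = 0, and log|m₀|² ∈ L¹(μ), then a := ∫_X log|m₀|² dμ < 0 (strict inequality). -/
open MeasureTheory

/-!
Strong invariance applied to `|m₀|²`, whose fibre averages are identically `1` by the QMF
condition, gives `∫ |m₀|² dμ = 1`. Since `log t ≤ t - 1` with equality only at `t = 1`,
`∫ log |m₀|² dμ ≤ ∫ |m₀|² dμ - 1 = 0`, and equality would force `|m₀|² = 1` almost everywhere.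
-/

section StrictGibbs

variable {α : Type*} [MeasurableSpace α] {μ : Measure α} [IsProbabilityMeasure μ] {f : α → ℝ}

theorem integral_log_lt_integral_sub_one (hf_pos : ∀ᵐ x ∂μ, 0 < f x) (hf : Integrable f μ)
    (hlog : Integrable (fun x => Real.log (f x)) μ) (hne : ¬ f =ᵐ[μ] 1) :
    ∫ x, Real.log (f x) ∂μ < ∫ x, f x ∂μ - 1 := by
  have hsub_int : Integrable (fun x => f x - 1) μ := hf.sub (integrable_const 1)
  have hgap_int : Integrable (fun x => f x - 1 - Real.log (f x)) μ := hsub_int.sub hlog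
  have hgap_nonneg : 0 ≤ᵐ[μ] fun x => f x - 1 - Real.log (f x) := by
    filter_upwards [hf_pos] with x hx
    exact sub_nonneg.mpr (Real.log_le_sub_one_of_pos hx)
  have hgap_pos : 0 < ∫ x, (f x - 1 - Real.log (f x)) ∂μ := by
    refine (integral_nonneg_of_ae hgap_nonneg).lt_of_ne fun h0 => hne ?_
    filter_upwards [(integral_eq_zero_iff_of_nonneg_ae hgap_nonneg hgap_int).mp h0.symm, hf_pos]
      with x hx hx_pos
    by_contra h1
    have := Real.log_lt_sub_one_of_pos hx_pos h1
    simp only [Pi.zero_apply] at hx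
    linarith
  have hsplit : ∫ x, (f x - 1 - Real.log (f x)) ∂μ
      = ∫ x, f x ∂μ - 1 - ∫ x, Real.log (f x) ∂μ := by
    rw [integral_sub hsub_int hlog, integral_sub hf (integrable_const 1),
      integral_const, probReal_univ, one_smul]
  linarith

end StrictGibbs

section FibreAverage

variable {X : Type*} {r : X → X}

noncomputable def fibreAverage (hfin : ∀ x, (r ⁻¹' {x}).Finite) (f : X → ℝ) (x : X) : ℝ :=
  ((hfin x).toFinset.card : ℝ)⁻¹ * ∑ y ∈ (hfin x).toFinset, f y

theorem integral_eq_of_fibreAverage_eq_const [MeasurableSpace X]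
    {hfin : ∀ x, (r ⁻¹' {x}).Finite} {μ : Measure X} [IsProbabilityMeasure μ]
    (hinv : ∀ f : X → ℝ, Measurable f → (∃ C, ∀ x, |f x| ≤ C) →
      ∫ x, f x ∂μ = ∫ x, fibreAverage hfin f x ∂μ)
    {f : X → ℝ} (hf : Measurable f) (hbd : ∃ C, ∀ x, |f x| ≤ C) {c : ℝ}
    (hc : ∀ x, fibreAverage hfin f x = c) :
    ∫ x, f x ∂μ = c := by
  simp [hinv f hf hbd, hc]

end FibreAverage

theorem integral_log_qmf_neg_general {X : Type*}
    [MeasurableSpace X]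
    (r : X → X)
    (hfin : ∀ x : X, (r ⁻¹' {x}).Finite)
    (μ : Measure X) [IsProbabilityMeasure μ]
    (hinv : ∀ f : X → ℝ, Measurable f → (∃ C, ∀ x, |f x| ≤ C) →
      ∫ x, f x ∂μ =
        ∫ x, ((hfin x).toFinset.card : ℝ)⁻¹ * ∑ y ∈ (hfin x).toFinset, f y ∂μ)
    (m₀ : X → ℂ) (hm : Measurable m₀) (hbd : ∃ C, ∀ x, ‖m₀ x‖ ≤ C)
    (hqmf : ∀ x : X, ((hfin x).toFinset.card : ℝ)⁻¹ *
      ∑ y ∈ (hfin x).toFinset, ‖m₀ y‖ ^ 2 = 1)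
    (hnonconst : ¬ ∃ c : ℝ, (fun x => ‖m₀ x‖ ^ 2) =ᵐ[μ] fun _ => c)
    (hnz : μ {x | m₀ x = 0} = 0)
    (hint : Integrable (fun x => Real.log (‖m₀ x‖ ^ 2)) μ) :
    ∫ x, Real.log (‖m₀ x‖ ^ 2) ∂μ < 0 := by
  obtain ⟨C, hC⟩ := hbd
  have hmeas : Measurable fun x => ‖m₀ x‖ ^ 2 := hm.norm.pow_const 2
  have hbd_sq : ∀ x, |‖m₀ x‖ ^ 2| ≤ C ^ 2 := fun x => by
    rw [abs_of_nonneg (by positivity)]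
    exact pow_le_pow_left₀ (norm_nonneg _) (hC x) 2
  have hpos : ∀ᵐ x ∂μ, 0 < ‖m₀ x‖ ^ 2 := by
    filter_upwards [measure_eq_zero_iff_ae_notMem.mp hnz] with x hx
    exact pow_pos (norm_pos_iff.mpr hx) 2
  have hone : ∫ x, ‖m₀ x‖ ^ 2 ∂μ = 1 :=
    integral_eq_of_fibreAverage_eq_const hinv hmeas ⟨C ^ 2, hbd_sq⟩ hqmf
  have hsq_int : Integrable (fun x => ‖m₀ x‖ ^ 2) μ :=
    .of_bound hmeas.aestronglyMeasurable (C ^ 2) (.of_forall hbd_sq)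
  have := integral_log_lt_integral_sub_one hpos hsq_int hint fun h => hnonconst ⟨1, h⟩
  linarith

/-- If `μ` is strongly `r`-invariant, `m₀` a QMF filter with `|m₀|²` not constant
`μ`-a.e., `μ(m₀ = 0) = 0`, and `log |m₀|² ∈ L¹(μ)`, then `∫ log |m₀|² dμ < 0`. -/
theorem integral_log_qmf_neg {X : Type*} [MetricSpace X] [CompactSpace X]
    [MeasurableSpace X] [BorelSpace X]
    (r : X → X) (hr : Function.Surjective r) (hrm : Measurable r)
    (hfin : ∀ x : X, (r ⁻¹' {x}).Finite)
    (μ : Measure X) [IsProbabilityMeasure μ]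
    (hinv : ∀ f : X → ℝ, Measurable f → (∃ C, ∀ x, |f x| ≤ C) →
      ∫ x, f x ∂μ =
        ∫ x, ((hfin x).toFinset.card : ℝ)⁻¹ * ∑ y ∈ (hfin x).toFinset, f y ∂μ)
    (m₀ : X → ℂ) (hm : Measurable m₀) (hbd : ∃ C, ∀ x, ‖m₀ x‖ ≤ C)
    (hqmf : ∀ x : X, ((hfin x).toFinset.card : ℝ)⁻¹ *
      ∑ y ∈ (hfin x).toFinset, ‖m₀ y‖ ^ 2 = 1)
    (hnonconst : ¬ ∃ c : ℝ, (fun x => ‖m₀ x‖ ^ 2) =ᵐ[μ] fun _ => c)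
    (hnz : μ {x | m₀ x = 0} = 0)
    (hint : Integrable (fun x => Real.log (‖m₀ x‖ ^ 2)) μ) :
    ∫ x, Real.log (‖m₀ x‖ ^ 2) ∂μ < 0 :=
  integral_log_qmf_neg_general r hfin μ hinv m₀ hm hbd hqmf hnonconst hnz hint
end

section
/- With Green function g(x,y) = ∑_{n≥0} p_n(x,y), the Martin kernel K(x,y) = g(x,y)/g(x₀,y) equals 1/(W(x)W(r(x))⋯W(r^{n(x)-1}(x))) if rⁿ(y) = x for some n ≥ 0, and 0 otherwise; in particular K(x,·) is constant on the subtree T(x) rooted at x. -/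
open Finset
noncomputable section
open scoped Classical

/-- The `n`-step transition probabilities of the random walk with one-step
transitions `p(x,y) = W(y)` if `r(y) = x`, else `0`. -/
noncomputable def pn {X : Type*} (r : X → X) (W : X → ℝ)
    (hfin : ∀ x : X, (r ⁻¹' {x}).Finite) : ℕ → X → X → ℝ
  | 0 => fun x y => if x = y then 1 else 0
  | n + 1 => fun x y =>
      ∑ z ∈ (hfin x).toFinset, (if r z = x then W z else 0) * pn r W hfin n z y

/-- The Green (potential) function `g(x,y) = ∑_{n≥0} p_n(x,y)`. -/
noncomputable def green {X : Type*} (r : X → X) (W : X → ℝ)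
    (hfin : ∀ x : X, (r ⁻¹' {x}).Finite) (x y : X) : ℝ :=
  ∑' n : ℕ, pn r W hfin n x y

/-- The Martin kernel `K(x,y) = g(x,y) / g(x₀,y)`. -/
noncomputable def martinK {X : Type*} (r : X → X) (W : X → ℝ)
    (hfin : ∀ x : X, (r ⁻¹' {x}).Finite) (x₀ x y : X) : ℝ :=
  green r W hfin x y / green r W hfin x₀ y

lemma pn_eq {X : Type*} (r : X → X) (W : X → ℝ)
    (hfin : ∀ x : X, (r ⁻¹' {x}).Finite) :
    ∀ (n : ℕ) (x y : X), pn r W hfin n x y =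
      if r^[n] y = x then ∏ k ∈ range n, W (r^[k] y) else 0
  | 0, x, y => by simp [pn, eq_comm]
  | n + 1, x, y => by
    simp only [pn]
    have h : ∀ z ∈ (hfin x).toFinset,
        (if r z = x then W z else 0) * pn r W hfin n z y =
        if r^[n] y = z then (if r z = x then W z else 0) *
          ∏ k ∈ range n, W (r^[k] y) else 0 := by
      intro z _
      rw [pn_eq r W hfin n z y]
      by_cases hz : r^[n] y = z <;> simp [hz]
    rw [Finset.sum_congr rfl h, Finset.sum_ite_eq]
    have hmem : r^[n] y ∈ (hfin x).toFinset ↔ r (r^[n] y) = x := by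
      simp [Set.Finite.mem_toFinset]
    by_cases hc : r (r^[n] y) = x
    · rw [if_pos (hmem.mpr hc), if_pos hc,
        if_pos (by rw [Function.iterate_succ_apply']; exact hc),
        Finset.prod_range_succ]
      ring
    · rw [if_neg (fun hm => hc (hmem.mp hm)),
        if_neg (by rw [Function.iterate_succ_apply']; exact hc)]

/-- `K(x,y) = 1/(W(x) W(r x) ⋯ W(r^{n(x)-1} x))` if `rⁿ(y) = x` for some `n ≥ 0`
(where `n(x)` is the unique `m` with `r^[m] x = x₀`), and `K(x,y) = 0` otherwise;
in particular `K(x,·)` is constant on the subtree rooted at `x`. -/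
theorem martinK_eq {X : Type*} (r : X → X) (W : X → ℝ)
    (hfin : ∀ x : X, (r ⁻¹' {x}).Finite)
    (hsum : ∀ x : X, ∑ y ∈ (hfin x).toFinset, W y = 1)
    (x₀ : X)
    (hreg : ∀ (x : X) (m n : ℕ), r^[m] x = x₀ → r^[n] x = x₀ → m = n)
    (hWpos : ∀ x : X, (∃ n, r^[n] x = x₀) → 0 < W x)
    (x y : X) (m : ℕ) (hx : r^[m] x = x₀) (hy : ∃ n, r^[n] y = x₀) :
    ((∃ n, r^[n] y = x) →
      martinK r W hfin x₀ x y = (∏ k ∈ range m, W (r^[k] x))⁻¹) ∧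
    ((∀ n, r^[n] y ≠ x) → martinK r W hfin x₀ x y = 0) := by
  constructor
  · rintro ⟨n, hn⟩
    -- y reaches x₀ in n + m steps
    have hnm : r^[n + m] y = x₀ := by
      rw [Nat.add_comm, Function.iterate_add_apply, hn, hx]
    -- Green function g(x, y)
    have hgx : green r W hfin x y = ∏ k ∈ range n, W (r^[k] y) := by
      rw [green, tsum_eq_single n]
      · rw [pn_eq, if_pos hn]
      · intro n' hn'
        rw [pn_eq]
        split
        · next h =>
          exfalso
          apply hn'
          have h' : r^[n' + m] y = x₀ := by
            rw [Nat.add_comm, Function.iterate_add_apply, h, hx]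
          have := hreg y (n' + m) (n + m) h' hnm
          omega
        · rfl
    -- Green function g(x₀, y)
    have hgx0 : green r W hfin x₀ y = ∏ k ∈ range (n + m), W (r^[k] y) := by
      rw [green, tsum_eq_single (n + m)]
      · rw [pn_eq, if_pos hnm]
      · intro n' hn'
        rw [pn_eq]
        split
        · next h => exact absurd (hreg y n' (n + m) h hnm) hn'
        · rfl
    have hsplit : ∏ k ∈ range (n + m), W (r^[k] y) =
        (∏ k ∈ range n, W (r^[k] y)) * ∏ k ∈ range m, W (r^[k] x) := by
      rw [Finset.prod_range_add]
      congr 1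
      refine Finset.prod_congr rfl fun k _ => ?_
      rw [Nat.add_comm, Function.iterate_add_apply, hn]
    have hApos : 0 < ∏ k ∈ range n, W (r^[k] y) := by
      refine Finset.prod_pos fun k hk => hWpos _ ⟨n + m - k, ?_⟩
      rw [← Function.iterate_add_apply, Nat.sub_add_cancel (by simp at hk; omega)]
      exact hnm
    have hBpos : 0 < ∏ k ∈ range m, W (r^[k] x) := by
      refine Finset.prod_pos fun k hk => hWpos _ ⟨m - k, ?_⟩
      rw [← Function.iterate_add_apply, Nat.sub_add_cancel (by simp at hk; omega)]
      exact hx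
    rw [martinK, hgx, hgx0, hsplit]
    rw [eq_comm, inv_eq_iff_eq_inv, eq_comm, inv_div]
    field_simp
  · intro hno
    have hg : green r W hfin x y = 0 := by
      rw [green]
      convert tsum_zero with n
      rw [pn_eq, if_neg (hno n)]
    rw [martinK, hg, zero_div]
end
end

section
/- Conversely, suppose for each x₀ ∈ X_r we are given an additive function ν_{x₀} on T(x₀) and these satisfy the compatibility ν_{r(x₀)}(x) = W(x₀)ν_{x₀}(x) for x ∈ T(x₀). Then h(x) := ν_{r(x)}(x)/W(x) = ν_x(x) defines an R_W-harmonic function on X_r: h(x) = ∑_{r(y)=x} W(y)h(y) for all x ∈ X_r. -/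
open Finset

/-- `x₀` is regular: the preimage sets `r⁻ⁿ(x₀)` are pairwise disjoint and `W` does
not vanish on the tree `T(x₀)`. -/
def Regular {X : Type*} (r : X → X) (W : X → ℝ) (x₀ : X) : Prop :=
  (∀ (x : X) (m n : ℕ), r^[m] x = x₀ → r^[n] x = x₀ → m = n) ∧
  (∀ x : X, (∃ n, r^[n] x = x₀) → W x ≠ 0)

/-- The set `X_r` of points whose entire forward orbit consists of regular points. -/
def Xr {X : Type*} (r : X → X) (W : X → ℝ) : Set X :=
  {x₀ | ∀ n : ℕ, Regular r W (r^[n] x₀)}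

/-- Given a compatible family of additive functions `ν_{x₀}` on the trees `T(x₀)`,
`x₀ ∈ X_r`, satisfying `ν_{r(x₀)}(x) = W(x₀) ν_{x₀}(x)`, the function
`h(x) = ν_{r(x)}(x)/W(x) = ν_x(x)` is `R_W`-harmonic on `X_r`. -/
theorem harmonic_from_compatible_family {X : Type*} (r : X → X) (W : X → ℝ)
    (hfin : ∀ x : X, (r ⁻¹' {x}).Finite)
    (hWpos : ∀ x, 0 < W x)
    (hsum : ∀ x : X, ∑ y ∈ (hfin x).toFinset, W y = 1)
    (ν : X → X → ℝ)
    (hadd : ∀ x₀ ∈ Xr r W, ∀ x : X, (∃ n, r^[n] x = x₀) →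
      ν x₀ x = ∑ y ∈ (hfin x).toFinset, ν x₀ y)
    (hcomp : ∀ x₀ ∈ Xr r W, ∀ x : X, (∃ n, r^[n] x = x₀) →
      ν (r x₀) x = W x₀ * ν x₀ x) :
    ∀ x ∈ Xr r W,
      ν (r x) x / W x = ν x x ∧
      ν x x = ∑ y ∈ (hfin x).toFinset, W y * ν y y := by
  intro x hx
  have hW : W x ≠ 0 := (hWpos x).ne'
  constructor
  · rw [hcomp x hx x ⟨0, rfl⟩]; field_simp
  · rw [hadd x hx x ⟨0, rfl⟩]
    refine Finset.sum_congr rfl fun y hy => ?_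
    have hry : r y = x := by simpa using hy
    have hyXr : y ∈ Xr r W := by
      intro n
      cases n with
      | zero =>
        refine ⟨fun z m k hm hk => ?_, fun z _ => (hWpos z).ne'⟩
        simp only [Function.iterate_zero_apply] at hm hk
        have h1 : r^[m + 1] z = x := by
          rw [Function.iterate_succ_apply', hm, hry]
        have h2 : r^[k + 1] z = x := by
          rw [Function.iterate_succ_apply', hk, hry]
        have := (hx 0).1 z (m + 1) (k + 1) (by simpa using h1) (by simpa using h2)
        omega
      | succ n =>
        have : r^[n + 1] y = r^[n] x := by
          rw [Function.iterate_succ_apply, hry]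
        rw [this]
        exact hx n
    have := hcomp y hyXr y ⟨0, rfl⟩
    rwa [hry] at this
end
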